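/- Let (a_k)_{k≥0} be a sequence of nonnegative reals, ā ≥ 1, d₀ ≥ 0, K₀ ≥ 1, and suppose a_k ≤ ā · 2^{d₀ k} · max{a_{k-1}², K₀^{q_k}} for all k ≥ 1, where q_k = 2^k + c for some constant c ≥ 0, and a₀ ≤ M for some M ≥ K₀^{q_0}. Then for all k ≥ 0, a_k ≤ (2ā)^{2^k - 1} · 2^{d₀(2^{k+1} - k - 2)} · max{M^{2^k}, K₀^{q_k}}. -/

import Mathlib

/-!
Majorize `a` by the sequence `b` solving the extremal recursion `b (k+1) = 2ā · 2^{d₀(k+1)} · (b k)²`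
with `b 0 = M`, whose closed form is the claimed bound with `M^{2^k}` in place of the maximum. Since
`K₀^{q_{k+1}} ≤ (K₀^{q_0})^{2^{k+1}} ≤ M^{2^{k+1}} ≤ (b k)²`, the second entry of the maximum in the
recursion never beats the first, so `a k ≤ b k` follows by induction.
-/

open Real

theorem le_of_le_mul_max_sq {a b A L : ℕ → ℝ} (ha : ∀ k, 0 ≤ a k) (hA : ∀ k, 0 ≤ A k)
    (hrec : ∀ k, a (k + 1) ≤ A k * max (a k ^ 2) (L k))
    (hb : ∀ k, A k * b k ^ 2 ≤ b (k + 1)) (hL : ∀ k, L k ≤ b k ^ 2) (h0 : a 0 ≤ b 0) :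
    ∀ k, a k ≤ b k := by
  intro k
  induction k with
  | zero => exact h0
  | succ k ih =>
    calc a (k + 1) ≤ A k * max (a k ^ 2) (L k) := hrec k
      _ ≤ A k * b k ^ 2 :=
        mul_le_mul_of_nonneg_left (max_le (pow_le_pow_left₀ (ha k) ih 2) (hL k)) (hA k)
      _ ≤ b (k + 1) := hb k

theorem rpow_two_pow_add_le_rpow_one_add_rpow {K c : ℝ} (hK : 1 ≤ K) (hc : 0 ≤ c) (n : ℕ) :
    K ^ ((2 : ℝ) ^ n + c) ≤ (K ^ (1 + c)) ^ ((2 : ℝ) ^ n) := by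
  have h2n : (1 : ℝ) ≤ 2 ^ n := one_le_pow₀ one_le_two
  rw [← rpow_mul (by linarith)]
  exact rpow_le_rpow_of_exponent_le hK (by nlinarith)

noncomputable def moserBound (abar d₀ M : ℝ) (k : ℕ) : ℝ :=
  (2 * abar) ^ ((2 : ℝ) ^ k - 1) * 2 ^ (d₀ * (2 ^ (k + 1) - k - 2)) * M ^ ((2 : ℝ) ^ k)

namespace moserBound

variable {abar d₀ M : ℝ}

theorem zero : moserBound abar d₀ M 0 = M := by
  simp [moserBound]

theorem succ (habar : 0 < abar) (hM : 0 < M) (k : ℕ) :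
    moserBound abar d₀ M (k + 1) = 2 * abar * 2 ^ (d₀ * (k + 1)) * moserBound abar d₀ M k ^ 2 := by
  have h2a : 0 < 2 * abar := by linarith
  simp only [moserBound, mul_pow, ← rpow_mul_natCast h2a.le, ← rpow_mul_natCast zero_lt_two.le,
    ← rpow_mul_natCast hM.le]
  rw [show (2 : ℝ) ^ (k + 1) - 1 = ((2 : ℝ) ^ k - 1) * (2 : ℕ) + 1 by push_cast; ring,
    rpow_add_one h2a.ne', show d₀ * (2 ^ (k + 1 + 1) - ((k + 1 : ℕ) : ℝ) - 2) =
      d₀ * (k + 1) + d₀ * (2 ^ (k + 1) - k - 2) * (2 : ℕ) by push_cast; ring,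
    rpow_add zero_lt_two, show (2 : ℝ) ^ (k + 1) = 2 ^ k * (2 : ℕ) by push_cast; ring]
  ring

theorem rpow_two_pow_le (habar : 1 ≤ 2 * abar) (hd₀ : 0 ≤ d₀) (hM : 0 ≤ M) (k : ℕ) :
    M ^ ((2 : ℝ) ^ k) ≤ moserBound abar d₀ M k := by
  have hk : (k : ℝ) + 2 ≤ 2 ^ (k + 1) := by exact_mod_cast Nat.lt_two_pow_self (n := k + 1)
  refine le_mul_of_one_le_left (by positivity) (one_le_mul_of_one_le_of_one_le ?_ ?_)
  · exact one_le_rpow habar (by linarith [one_le_pow₀ (M₀ := ℝ) one_le_two (n := k)])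
  · exact one_le_rpow one_le_two (mul_nonneg hd₀ (by linarith))

end moserBound

/-- abstract Moser-iteration recursion lemma: if a_k ≥ 0 satisfies
a_k ≤ ā·2^{d₀ k}·max{a_{k-1}², K₀^{q_k}} for k ≥ 1, with q_k = 2^k + c, c ≥ 0,
ā, K₀ ≥ 1, d₀ ≥ 0, and a₀ ≤ M with M ≥ K₀^{q_0}, then for all k,
a_k ≤ (2ā)^{2^k-1} · 2^{d₀(2^{k+1}-k-2)} · max{M^{2^k}, K₀^{q_k}}. -/
theorem stmt_12 (a : ℕ → ℝ) (abar d₀ K₀ c M : ℝ)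
    (ha : ∀ k, 0 ≤ a k) (habar : 1 ≤ abar) (hd₀ : 0 ≤ d₀) (hK₀ : 1 ≤ K₀)
    (hc : 0 ≤ c)
    (q : ℕ → ℝ) (hq : ∀ k : ℕ, q k = 2 ^ k + c)
    (hrec : ∀ k : ℕ, a (k + 1) ≤
      abar * 2 ^ (d₀ * (k + 1)) * max ((a k) ^ 2) (K₀ ^ q (k + 1)))
    (ha0 : a 0 ≤ M) (hM : K₀ ^ q 0 ≤ M) :
    ∀ k : ℕ, a k ≤ (2 * abar) ^ ((2 : ℝ) ^ k - 1) *
      2 ^ (d₀ * (2 ^ (k + 1) - k - 2)) *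
      max (M ^ ((2 : ℝ) ^ k)) (K₀ ^ q k) := by
  have hq0 : q 0 = 1 + c := by rw [hq, pow_zero]
  have hM₁ : 1 ≤ M := (one_le_rpow hK₀ (by linarith)).trans (hq0 ▸ hM)
  have hKq : ∀ k, K₀ ^ q (k + 1) ≤ moserBound abar d₀ M k ^ 2 := fun k => calc
    K₀ ^ q (k + 1) ≤ (K₀ ^ (1 + c)) ^ ((2 : ℝ) ^ (k + 1)) := by
      rw [hq]; exact rpow_two_pow_add_le_rpow_one_add_rpow hK₀ hc _
    _ ≤ M ^ ((2 : ℝ) ^ (k + 1)) := by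
      gcongr
      exact hq0 ▸ hM
    _ = (M ^ ((2 : ℝ) ^ k)) ^ 2 := by
      rw [← rpow_mul_natCast (by linarith), pow_succ]; norm_num
    _ ≤ moserBound abar d₀ M k ^ 2 := by
      gcongr
      exact moserBound.rpow_two_pow_le (by linarith) hd₀ (by linarith) k
  have ha_le := le_of_le_mul_max_sq ha (fun k => by positivity) hrec
    (fun k => by
      rw [moserBound.succ (by linarith) (by linarith)]
      gcongr; linarith)
    hKq (moserBound.zero ▸ ha0)
  intro k
  calc a k ≤ moserBound abar d₀ M k := ha_le k
    _ ≤ _ := by unfold moserBound; gcongr; exact le_max_left _ _
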